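/- If Γ ⊢ ⊥ in P[⊥_w] and At⁺(φ) ⊆ At⁺(Γ), then Γ ⊢ φ in P[⊥_w]. -/

import Mathlib

/-- Infons: formulas built from atoms, ⊤, ⊥, conjunction and primal implication. -/
inductive Infon : Type
  | atom : ℕ → Infon
  | top : Infon
  | bot : Infon
  | and : Infon → Infon → Infon
  | imp : Infon → Infon → Infon
deriving DecidableEq

/-- Derivability in the basic primal infon logic P (⊥ is an ordinary atom, no rule for it). -/
inductive DerP : Set Infon → Infon → Prop
  | top (Γ : Set Infon) : DerP Γ .top
  | id (φ : Infon) : DerP {φ} φ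
  | weak {Γ φ} (Δ : Set Infon) : DerP Γ φ → DerP (Γ ∪ Δ) φ
  | cut {Γ φ ψ} : DerP Γ φ → DerP (insert φ Γ) ψ → DerP Γ ψ
  | andI {Γ φ ψ} : DerP Γ φ → DerP Γ ψ → DerP Γ (.and φ ψ)
  | andE1 {Γ φ ψ} : DerP Γ (.and φ ψ) → DerP Γ φ
  | andE2 {Γ φ ψ} : DerP Γ (.and φ ψ) → DerP Γ ψ
  | impI {Γ ψ} (φ : Infon) : DerP Γ ψ → DerP Γ (.imp φ ψ)
  | impE {Γ φ ψ} : DerP Γ φ → DerP Γ (.imp φ ψ) → DerP Γ ψ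

/-- Derivability in P[⊥_w]: P plus the weak ⊥-elimination rule. -/
inductive DerW : Set Infon → Infon → Prop
  | top (Γ : Set Infon) : DerW Γ .top
  | id (φ : Infon) : DerW {φ} φ
  | weak {Γ φ} (Δ : Set Infon) : DerW Γ φ → DerW (Γ ∪ Δ) φ
  | cut {Γ φ ψ} : DerW Γ φ → DerW (insert φ Γ) ψ → DerW Γ ψ
  | andI {Γ φ ψ} : DerW Γ φ → DerW Γ ψ → DerW Γ (.and φ ψ)
  | andE1 {Γ φ ψ} : DerW Γ (.and φ ψ) → DerW Γ φ
  | andE2 {Γ φ ψ} : DerW Γ (.and φ ψ) → DerW Γ ψ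
  | impI {Γ ψ} (φ : Infon) : DerW Γ ψ → DerW Γ (.imp φ ψ)
  | impE {Γ φ ψ} : DerW Γ φ → DerW Γ (.imp φ ψ) → DerW Γ ψ
  | botEw {Γ φ ψ} : DerW Γ .bot → DerW Γ (.imp φ ψ) → DerW Γ ψ

/-- Positive atoms of an infon. -/
def posAt : Infon → Set Infon
  | .and φ ψ => posAt φ ∪ posAt ψ
  | .imp _ ψ => posAt ψ
  | φ => {φ}

/-- Positive atoms of a context. -/
def posCtx (Γ : Set Infon) : Set Infon := ⋃ φ ∈ Γ, posAt φ

/-! Weak ⊥-elimination turns a derivable `φ → ψ` into a derivable `ψ` as soon as `⊥` is derivable,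
so from `Γ ⊢ ⊥` every positive atom of every hypothesis is derivable. Conversely, any infon is
derivable once its positive atoms are: `∧`-introduction and primal `→`-introduction rebuild it,
the latter ignoring the premise. -/

namespace DerW

theorem of_mem {Γ : Set Infon} {ψ : Infon} (h : ψ ∈ Γ) : DerW Γ ψ := by
  have h' := (DerW.id ψ).weak Γ
  rwa [Set.union_eq_self_of_subset_left (Set.singleton_subset_iff.2 h)] at h'

theorem of_mem_posAt {Γ : Set Infon} {ψ a : Infon} (hbot : DerW Γ .bot) (hψ : DerW Γ ψ)
    (ha : a ∈ posAt ψ) : DerW Γ a := by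
  induction ψ generalizing a with
  | and φ χ ihφ ihχ =>
    rcases ha with ha | ha
    · exact ihφ hψ.andE1 ha
    · exact ihχ hψ.andE2 ha
  | imp _ χ _ ihχ => exact ihχ (hbot.botEw hψ) ha
  | atom | top | bot =>
    simp only [posAt, Set.mem_singleton_iff] at ha
    exact ha ▸ hψ

theorem of_mem_posCtx {Γ : Set Infon} {a : Infon} (hbot : DerW Γ .bot) (ha : a ∈ posCtx Γ) :
    DerW Γ a := by
  obtain ⟨χ, hχ, haχ⟩ := Set.mem_iUnion₂.1 ha
  exact of_mem_posAt hbot (of_mem hχ) haχ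

theorem of_forall_mem_posAt {Γ : Set Infon} {φ : Infon} (h : ∀ a ∈ posAt φ, DerW Γ a) :
    DerW Γ φ := by
  induction φ with
  | and φ ψ ihφ ihψ =>
    exact andI (ihφ fun a ha => h a (Or.inl ha)) (ihψ fun a ha => h a (Or.inr ha))
  | imp φ _ _ ihψ => exact impI φ (ihψ h)
  | atom | top | bot => exact h _ rfl

end DerW

/-- If Γ ⊢ ⊥ in P[⊥_w] and At⁺(φ) ⊆ At⁺(Γ), then Γ ⊢ φ in P[⊥_w]. -/
theorem derW_of_atplus_subset (Γ : Set Infon) (φ : Infon)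
    (hbot : DerW Γ .bot) (hsub : posAt φ ⊆ posCtx Γ) : DerW Γ φ :=
  DerW.of_forall_mem_posAt fun _ ha => DerW.of_mem_posCtx hbot (hsub ha)
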